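/- Consider a hypergraph H = (V,E) with open intervals in which no vertex is known mandatory by the leftmost-containment rule (no hyperedge has a leftmost vertex whose interval contains another vertex's interval of that hyperedge, and leftmost vertices are unique). Define the vertex cover instance Ḡ = (V, Ē) where {v,u} ∈ Ē iff some unsolved hyperedge F contains both, v is leftmost in F, and I_v ∩ I_u ≠ ∅. Then any vertex cover Q of Ḡ, once queried, followed by exhaustively querying vertices that become known mandatory by the leftmost-containment rule, yields a feasible query set: the orientation of every hyperedge becomes determined. -/

import Mathlib

/-!
A hyperedge that is already solved stays solved under further queries. In an unsolved hyperedge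
`F` let `v` be its unique leftmost vertex; since no interval of `F` is nested in `I_v`, `v` also
has the smallest upper endpoint.

If `v` was queried, every vertex `u ≠ v` of `F` left unqueried is not mandatory. A feasible query
set avoiding `u` cannot let `u` win `F` (its upper end `U u` exceeds `U v > w v`), so some weight
of `F` lies below `L u`. Hence the vertex of minimum weight in `F` is queried and lies below all
remaining intervals.

If `v` was not queried, it is not mandatory, so by the leftmost-containment rule no revealed
weight of `F` lies in `I_v`; and an unqueried `u` whose interval meets `I_v` would give an edge
`{v, u}` of the vertex cover instance with neither end in `Q`. So `v` itself lies below all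
remaining intervals.
-/

open Finset

/-- Lower endpoint of vertex `v`'s interval after querying the set `Q`. -/
def qlo {V : Type*} [DecidableEq V] (L w : V → ℝ) (Q : Finset V) (v : V) : ℝ :=
  if v ∈ Q then w v else L v

/-- Upper endpoint of vertex `v`'s interval after querying the set `Q`. -/
def qhi {V : Type*} [DecidableEq V] (U w : V → ℝ) (Q : Finset V) (v : V) : ℝ :=
  if v ∈ Q then w v else U v

/-- The query set `Q` suffices to orient the hyperedge `S`: some vertex of `S`
has its (updated) interval weakly below all other (updated) intervals of `S`. -/
def Solves {V : Type*} [DecidableEq V] (L U w : V → ℝ) (Q : Finset V) (S : Finset V) : Prop :=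
  ∃ m ∈ S, ∀ u ∈ S, u ≠ m → qhi U w Q m ≤ qlo L w Q u

section

variable {V : Type*} [DecidableEq V] {L U w : V → ℝ} {E : Finset (Finset V)}
  {Q R S F : Finset V} {u v x : V}

def Feasible (L U w : V → ℝ) (E : Finset (Finset V)) (Q : Finset V) : Prop :=
  ∀ S ∈ E, Solves L U w Q S

def Mandatory (L U w : V → ℝ) (E : Finset (Finset V)) (v : V) : Prop :=
  ∀ Q, Feasible L U w E Q → v ∈ Q

@[simp] lemma qlo_of_mem (h : x ∈ Q) : qlo L w Q x = w x := if_pos h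

@[simp] lemma qlo_of_notMem (h : x ∉ Q) : qlo L w Q x = L x := if_neg h

@[simp] lemma qhi_of_mem (h : x ∈ Q) : qhi U w Q x = w x := if_pos h

@[simp] lemma qhi_of_notMem (h : x ∉ Q) : qhi U w Q x = U x := if_neg h

variable (hw : ∀ x, w x ∈ Set.Ioo (L x) (U x))
include hw

lemma le_qlo : L x ≤ qlo L w Q x := by
  by_cases h : x ∈ Q <;> simp [h, (hw x).1.le]

lemma qlo_le : qlo L w Q x ≤ w x := by
  by_cases h : x ∈ Q <;> simp [h, (hw x).1.le]

lemma le_qhi : w x ≤ qhi U w Q x := by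
  by_cases h : x ∈ Q <;> simp [h, (hw x).2.le]

lemma qhi_le : qhi U w Q x ≤ U x := by
  by_cases h : x ∈ Q <;> simp [h, (hw x).2.le]

lemma qlo_mono (hQR : Q ⊆ R) : qlo L w Q x ≤ qlo L w R x := by
  by_cases h : x ∈ Q
  · simp [h, hQR h]
  · simpa [h] using le_qlo hw

lemma qhi_antitone (hQR : Q ⊆ R) : qhi U w R x ≤ qhi U w Q x := by
  by_cases h : x ∈ Q
  · simp [h, hQR h]
  · simpa [h] using qhi_le hw

lemma Solves.mono (hS : Solves L U w Q S) (hQR : Q ⊆ R) : Solves L U w R S := by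
  obtain ⟨m, hm, hmin⟩ := hS
  exact ⟨m, hm, fun u hu hum =>
    (qhi_antitone hw hQR).trans ((hmin u hu hum).trans (qlo_mono hw hQR))⟩

/-- The leftmost-containment rule. -/
lemma mandatory_of_weight_lt_upper (hF : F ∈ E) (hv : v ∈ F) (hleft : ∀ x ∈ F, L v ≤ L x)
    (hu : u ∈ F) (huv : u ≠ v) (hwu : w u < U v) : Mandatory L U w E v := by
  intro Q hQ
  by_contra hvQ
  obtain ⟨m, hm, hmin⟩ := hQ F hF
  by_cases hmv : m = v
  · subst hmv
    have := hmin u hu huv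
    rw [qhi_of_notMem hvQ] at this
    linarith [qlo_le hw (Q := Q) (x := u)]
  · have := hmin v hv (Ne.symm hmv)
    rw [qlo_of_notMem hvQ] at this
    linarith [le_qhi hw (Q := Q) (x := m), hleft m hm, (hw m).1]

lemma solves_of_weight_min (hm : v ∈ S) (hmin : ∀ z ∈ S, w v ≤ w z)
    (hunq : ∀ u ∈ S, u ∉ Q → w v ≤ L u) : Solves L U w Q S := by
  have hvQ : v ∈ Q := by
    by_contra hvQ
    exact (hunq v hm hvQ).not_gt (hw v).1
  refine ⟨v, hm, fun u hu _ => ?_⟩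
  by_cases huQ : u ∈ Q
  · simpa [hvQ, huQ] using hmin u hu
  · simpa [hvQ, huQ] using hunq u hu huQ

/-- A feasible query set avoiding `u` cannot let `u` win `F`, since `U u > U v > w v`. -/
lemma exists_weight_le_of_not_mandatory (hF : F ∈ E) (hv : v ∈ F)
    (hUv : ∀ u ∈ F, u ≠ v → U v < U u) (hu : u ∈ F) (huv : u ≠ v)
    (hnm : ¬ Mandatory L U w E u) : ∃ z ∈ F, w z ≤ L u := by
  simp only [Mandatory, not_forall] at hnm
  obtain ⟨Q, hQ, huQ⟩ := hnm
  obtain ⟨m, hm, hmin⟩ := hQ F hF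
  have hmu : m ≠ u := by
    rintro rfl
    have := hmin v hv (Ne.symm huv)
    rw [qhi_of_notMem huQ] at this
    linarith [qlo_le hw (Q := Q) (x := v), (hw v).2, hUv m hu huv]
  refine ⟨m, hm, ?_⟩
  have := hmin u hu (Ne.symm hmu)
  rw [qlo_of_notMem huQ] at this
  exact (le_qhi hw).trans this

lemma solves_of_leftmost_mem (hF : F ∈ E) (hv : v ∈ F) (hUv : ∀ u ∈ F, u ≠ v → U v < U u)
    (hvR : v ∈ R) (hR : ∀ u, Mandatory L U w E u → u ∈ R) : Solves L U w R F := by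
  obtain ⟨m, hm, hmin⟩ := F.exists_min_image w ⟨v, hv⟩
  refine solves_of_weight_min hw hm hmin fun u hu huR => ?_
  obtain ⟨z, hz, hzu⟩ := exists_weight_le_of_not_mandatory hw hF hv hUv hu
    (fun h => huR (h ▸ hvR)) (fun h => huR (hR u h))
  exact (hmin z hz).trans hzu

lemma solves_of_leftmost_notMem (hF : F ∈ E) (hv : v ∈ F) (hleft : ∀ x ∈ F, L v ≤ L x)
    (hvR : v ∉ R) (hnm : ¬ Mandatory L U w E v)
    (hsep : ∀ u ∈ F, u ≠ v → u ∉ R → U v ≤ L u) : Solves L U w R F := by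
  refine ⟨v, hv, fun u hu huv => ?_⟩
  rw [qhi_of_notMem hvR]
  by_cases huR : u ∈ R
  · rw [qlo_of_mem huR]
    by_contra! hwu
    exact hnm (mandatory_of_weight_lt_upper hw hF hv hleft hu huv hwu)
  · rw [qlo_of_notMem huR]
    exact hsep u hu huv huR

end

theorem stmt18 {V : Type*} [Fintype V] [DecidableEq V] (L U w : V → ℝ)
    (hw : ∀ x : V, w x ∈ Set.Ioo (L x) (U x))
    (E : Finset (Finset V))
    (hnomand : ∀ F ∈ E, ¬ Solves L U w ∅ F → ∃ v ∈ F,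
      (∀ x ∈ F, x ≠ v → L v < L x) ∧
      ∀ u ∈ F, u ≠ v → ¬ (Set.Ioo (L u) (U u) ⊆ Set.Ioo (L v) (U v)))
    (Q : Finset V)
    (hVC : ∀ v u : V, (∃ F ∈ E, ¬ Solves L U w ∅ F ∧ v ∈ F ∧ u ∈ F ∧ v ≠ u ∧
        (∀ x ∈ F, L v ≤ L x) ∧
        (Set.Ioo (L v) (U v) ∩ Set.Ioo (L u) (U u)).Nonempty) → v ∈ Q ∨ u ∈ Q) :
    ∃ M : Finset V,
      (∀ v ∈ M, ∀ Q' : Finset V, (∀ S ∈ E, Solves L U w Q' S) → v ∈ Q') ∧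
      ∀ S ∈ E, Solves L U w (Q ∪ M) S := by
  classical
  set M := univ.filter (Mandatory L U w E)
  refine ⟨M, fun v hv => (mem_filter.1 hv).2, fun F hF => ?_⟩
  have hMR : ∀ u, Mandatory L U w E u → u ∈ Q ∪ M := fun u hu => by simp [M, hu]
  by_cases hsolved : Solves L U w ∅ F
  · exact hsolved.mono hw (empty_subset _)
  obtain ⟨v, hv, hvL, hvNC⟩ := hnomand F hF hsolved
  have hleft : ∀ x ∈ F, L v ≤ L x := fun x hx =>
    if hxv : x = v then hxv ▸ le_rfl else (hvL x hx hxv).le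
  have hUv : ∀ u ∈ F, u ≠ v → U v < U u := fun u hu huv => by
    by_contra! h
    exact hvNC u hu huv (Set.Ioo_subset_Ioo (hleft u hu) h)
  by_cases hvR : v ∈ Q ∪ M
  · exact solves_of_leftmost_mem hw hF hv hUv hvR hMR
  refine solves_of_leftmost_notMem hw hF hv hleft hvR (fun h => hvR (hMR v h)) ?_
  intro u hu huv huR
  by_contra! hoverlap
  have hmeet : (Set.Ioo (L v) (U v) ∩ Set.Ioo (L u) (U u)).Nonempty := by
    rw [Set.Ioo_inter_Ioo, Set.nonempty_Ioo, sup_eq_right.2 (hleft u hu)]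
    exact lt_inf_iff.2 ⟨hoverlap, (hw u).1.trans (hw u).2⟩
  rcases hVC v u ⟨F, hF, hsolved, hv, hu, Ne.symm huv, hleft, hmeet⟩ with h | h
  · exact hvR (mem_union_left M h)
  · exact huR (mem_union_left M h)
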